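/- arXiv:1609.03849 — 2 statements merged into one kernel-verified Lean document; each statement's English description precedes it below -/
import Mathlib

section
/- Crenel boundaries, part 1 (Proposition 5.3(1)). Let d≥1, 0<r_0≤1, and let Λ⊂ℝ^d satisfy |p−q|≥r_0 for all p≠q∈Λ. Then for every ℓ≥1 and a∈ℝ^d there exist a compact set Γ⊂ℝ^d and a bi-Lipschitz homeomorphism f from K_ℓ(a) onto Γ with sup_{x∈K_ℓ(a)}|f(x)−x| ≤ 1, such that every p∈Λ∩Γ satisfies dist(p,∂Γ) ≥ r_0/8. -/
open MeasureTheory Metric Set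

/-- The closed axis-parallel cube of sidelength `l` centered at `a`. -/
def cube (d : ℕ) (a : EuclideanSpace ℝ (Fin d)) (l : ℝ) : Set (EuclideanSpace ℝ (Fin d)) :=
  {x | ∀ i, |x i - a i| ≤ l / 2}

/-!
Only the points of `Λ` within `5r₀/8` of `∂K`, `K` the cube, need attention, and there are
finitely many of them. Next to each such `q` there is a centre `c`, within `r₀/32` of `q`, at
distance at least `δ = r₀/(64√d)` from `∂K` (in sup-norm coordinates `∂K` is a sphere, and one
moves `q` radially off it). A radial bi-Lipschitz map about `c`, supported in the ball of radius
`r₀/4`, pushes the sphere of radius `δ` out to radius `3r₀/16`, so afterwards `∂K` stays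
`5r₀/32` away from `q`. Since `Λ` is `r₀`-separated these supports are disjoint, so the composite
of all these maps moves no point by more than `r₀/2`, which keeps the boundary `r₀/8` away from
the untreated points of `Λ` as well.
-/

open scoped RealInnerProductSpace NNReal
open Bornology Function

theorem TotallyBounded.finite_of_pairwise_le_dist {X : Type*} [PseudoMetricSpace X]
    {s : Set X} (hs : TotallyBounded s) {r : ℝ} (hr : 0 < r)
    (hsep : s.Pairwise fun p q => r ≤ dist p q) : s.Finite := by
  obtain ⟨t, hts, ht, hcover⟩ := finite_approx_of_totallyBounded hs r hr
  refine ht.subset fun p hp => ?_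
  obtain ⟨q, hq, hpq⟩ := mem_iUnion₂.1 (hcover hp)
  by_contra hpt
  exact (hsep hp (hts hq) (ne_of_mem_of_not_mem hq hpt).symm).not_gt hpq

namespace Crenel

section Slope

def HasSlopeIn (m L : ℝ) (φ : ℝ → ℝ) : Prop :=
  ∀ ⦃r s⦄, r ≤ s → m * (s - r) ≤ φ s - φ r ∧ φ s - φ r ≤ L * (s - r)

variable {m L : ℝ} {φ ψ : ℝ → ℝ}

theorem hasSlopeIn_affine (a r₀ b : ℝ) (hm : m ≤ a) (hL : a ≤ L) :
    HasSlopeIn m L fun r => a * (r - r₀) + b := fun r s h => by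
  constructor <;> nlinarith

theorem HasSlopeIn.min (hφ : HasSlopeIn m L φ) (hψ : HasSlopeIn m L ψ) :
    HasSlopeIn m L fun r => min (φ r) (ψ r) := fun r s h => by
  obtain ⟨h₁, h₂⟩ := hφ h
  obtain ⟨h₃, h₄⟩ := hψ h
  constructor <;> simp only [min_def] <;> split_ifs <;> linarith

theorem HasSlopeIn.max (hφ : HasSlopeIn m L φ) (hψ : HasSlopeIn m L ψ) :
    HasSlopeIn m L fun r => max (φ r) (ψ r) := fun r s h => by
  obtain ⟨h₁, h₂⟩ := hφ h
  obtain ⟨h₃, h₄⟩ := hψ h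
  constructor <;> simp only [max_def] <;> split_ifs <;> linarith

theorem HasSlopeIn.abs_sub_bounds (hφ : HasSlopeIn m L φ) (hm : 0 ≤ m) (r s : ℝ) :
    m * |s - r| ≤ |φ s - φ r| ∧ |φ s - φ r| ≤ L * |s - r| := by
  rcases le_total r s with h | h
  · obtain ⟨h₁, h₂⟩ := hφ h
    have := mul_nonneg hm (sub_nonneg.2 h)
    rw [abs_of_nonneg (sub_nonneg.2 h), abs_of_nonneg (by linarith)]
    exact ⟨h₁, h₂⟩
  · obtain ⟨h₁, h₂⟩ := hφ h
    have := mul_nonneg hm (sub_nonneg.2 h)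
    rw [abs_of_nonpos (sub_nonpos.2 h), abs_of_nonpos (by linarith)]
    constructor <;> linarith

theorem HasSlopeIn.sq_sub_bounds (hφ : HasSlopeIn m L φ) (hm : 0 ≤ m) (r s : ℝ) :
    m ^ 2 * (s - r) ^ 2 ≤ (φ s - φ r) ^ 2 ∧ (φ s - φ r) ^ 2 ≤ L ^ 2 * (s - r) ^ 2 := by
  obtain ⟨h₁, h₂⟩ := hφ.abs_sub_bounds hm r s
  rw [← sq_abs (s - r), ← sq_abs (φ s - φ r), ← mul_pow, ← mul_pow]
  exact ⟨pow_le_pow_left₀ (by positivity) h₁ 2, pow_le_pow_left₀ (abs_nonneg _) h₂ 2⟩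

theorem HasSlopeIn.continuous (hφ : HasSlopeIn m L φ) (hm : 0 ≤ m) : Continuous φ :=
  (LipschitzWith.of_dist_le' fun r s => by
    simpa only [Real.dist_eq] using (hφ.abs_sub_bounds hm s r).2).continuous

theorem HasSlopeIn.div_self_bounds (hφ : HasSlopeIn m L φ) (hφ0 : φ 0 = 0) {r : ℝ} (hr : 0 < r) :
    m ≤ φ r / r ∧ φ r / r ≤ L := by
  obtain ⟨h₁, h₂⟩ := hφ hr.le
  rw [hφ0, sub_zero, sub_zero] at h₁ h₂
  exact ⟨(le_div_iff₀ hr).2 h₁, (div_le_iff₀ hr).2 h₂⟩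

theorem exists_radial_profile {δ D ρ : ℝ} (hδ : 0 < δ) (hδD : δ < D) (hDρ : D < ρ) :
    ∃ (φ : ℝ → ℝ) (m L : ℝ), 0 < m ∧ HasSlopeIn m L φ ∧ φ 0 = 0 ∧
      (∀ r, ρ ≤ r → φ r = r) ∧ ∀ r, δ ≤ r → D ≤ φ r := by
  set m := (ρ - D) / (ρ - δ)
  have hm : 0 < m := div_pos (by linarith) (by linarith)
  have hm₁ : m ≤ 1 := (div_le_one (by linarith)).2 (by linarith)
  have hmρ : m * (ρ - δ) = ρ - D := div_mul_cancel₀ _ (by linarith)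
  have hL : 1 ≤ D / δ := (one_le_div hδ).2 hδD.le
  have hDδ : D / δ * δ = D := div_mul_cancel₀ _ hδ.ne'
  have hsteep : HasSlopeIn m (D / δ) fun r => D / δ * r := by
    simpa using hasSlopeIn_affine (D / δ) 0 0 (by linarith) le_rfl
  have hid : HasSlopeIn m (D / δ) fun r => r := by
    simpa using hasSlopeIn_affine 1 0 0 hm₁ hL
  refine ⟨fun r => min (D / δ * r) (max (m * (r - δ) + D) r), m, D / δ, hm,
    hsteep.min ((hasSlopeIn_affine m δ D le_rfl (by linarith)).max hid), ?_, fun r hr => ?_,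
    fun r hr => ?_⟩
  · simp
  · have h₁ : m * (r - δ) + D ≤ r := by nlinarith
    have h₂ : r ≤ D / δ * r := by nlinarith
    simp only [max_eq_right h₁, min_eq_right h₂]
  · have h₁ : D ≤ D / δ * r := by nlinarith
    have h₂ : D ≤ m * (r - δ) + D := by nlinarith
    exact le_min h₁ (le_max_of_le_left h₂)

end Slope

section Radial

variable {E : Type*} [NormedAddCommGroup E] [InnerProductSpace ℝ E] {φ : ℝ → ℝ} {m L : ℝ}

noncomputable def radialMap (φ : ℝ → ℝ) (c x : E) : E :=
  c + (φ ‖x - c‖ / ‖x - c‖) • (x - c)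

theorem radialMap_eq_self {c x : E} (h : φ (dist x c) = dist x c) : radialMap φ c x = x := by
  rcases eq_or_ne x c with rfl | hxc
  · simp [radialMap]
  · rw [radialMap, ← dist_eq_norm, h, div_self (dist_ne_zero.2 hxc), one_smul, add_sub_cancel]

theorem dist_radialMap_center (hφ0 : φ 0 = 0) (c x : E) :
    dist (radialMap φ c x) c = |φ (dist x c)| := by
  rw [dist_eq_norm, radialMap, add_sub_cancel_left, norm_smul, Real.norm_eq_abs, abs_div,
    abs_norm, ← dist_eq_norm, div_mul_cancel_of_imp]
  intro h
  rw [h, hφ0, abs_zero]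

theorem norm_smul_sub_smul_sq (α β : ℝ) (p q : E) :
    ‖α • p - β • q‖ ^ 2 = (α * ‖p‖ - β * ‖q‖) ^ 2 + 2 * (α * β) * (‖p‖ * ‖q‖ - ⟪p, q⟫) := by
  rw [norm_sub_sq_real, norm_smul, norm_smul, real_inner_smul_left, real_inner_smul_right,
    Real.norm_eq_abs, Real.norm_eq_abs, mul_pow, mul_pow, sq_abs, sq_abs]
  ring

/-- Writing `x - c = p`, `y - c = q`, both squared distances split into a radial part
`(‖p‖ - ‖q‖)²` and an angular part `2 (‖p‖ ‖q‖ - ⟪p, q⟫)`; the radial map scales the first by a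
factor in `[m², L²]` (slopes of `φ`) and the second by one in `[m², L²]` (ratios `φ r / r`). -/
theorem HasSlopeIn.dist_radialMap_bounds (hφ : HasSlopeIn m L φ) (hm : 0 ≤ m) (hφ0 : φ 0 = 0)
    (c x y : E) :
    m * dist x y ≤ dist (radialMap φ c x) (radialMap φ c y) ∧
      dist (radialMap φ c x) (radialMap φ c y) ≤ L * dist x y := by
  set p := x - c
  set q := y - c
  set t := ‖p‖ * ‖q‖ - ⟪p, q⟫
  have hmL : m ≤ L := by have := hφ zero_le_one; linarith
  have hφv : ∀ v : E, φ ‖v‖ / ‖v‖ * ‖v‖ = φ ‖v‖ :=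
    fun v => div_mul_cancel_of_imp fun h => by rw [h, hφ0]
  have hG : dist (radialMap φ c x) (radialMap φ c y) ^ 2 =
      (φ ‖p‖ - φ ‖q‖) ^ 2 + 2 * (φ ‖p‖ / ‖p‖ * (φ ‖q‖ / ‖q‖)) * t := by
    rw [dist_eq_norm, radialMap, radialMap, add_sub_add_left_eq_sub, norm_smul_sub_smul_sq,
      hφv, hφv]
  have hD : dist x y ^ 2 = (‖p‖ - ‖q‖) ^ 2 + 2 * t := by
    rw [dist_eq_norm, ← sub_sub_sub_cancel_right x y c]
    simpa only [one_smul, one_mul, mul_one] using norm_smul_sub_smul_sq (1 : ℝ) 1 p q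
  have ht : 0 ≤ t := sub_nonneg.2 (real_inner_le_norm p q)
  have hangular : m ^ 2 * t ≤ φ ‖p‖ / ‖p‖ * (φ ‖q‖ / ‖q‖) * t ∧
      φ ‖p‖ / ‖p‖ * (φ ‖q‖ / ‖q‖) * t ≤ L ^ 2 * t := by
    rcases (norm_nonneg p).eq_or_lt with hp | hp
    · simp [t, norm_eq_zero.1 hp.symm]
    rcases (norm_nonneg q).eq_or_lt with hq | hq
    · simp [t, norm_eq_zero.1 hq.symm]
    obtain ⟨hp₁, hp₂⟩ := hφ.div_self_bounds hφ0 hp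
    obtain ⟨hq₁, hq₂⟩ := hφ.div_self_bounds hφ0 hq
    constructor
    · exact mul_le_mul_of_nonneg_right (by nlinarith) ht
    · exact mul_le_mul_of_nonneg_right (by nlinarith) ht
  have hradial := hφ.sq_sub_bounds hm ‖q‖ ‖p‖
  constructor
  · refine (pow_le_pow_iff_left₀ (by positivity) dist_nonneg two_ne_zero).1 ?_
    rw [mul_pow, hG, hD]
    linarith [hangular.1, hradial.1]
  · refine (pow_le_pow_iff_left₀ dist_nonneg (mul_nonneg (hm.trans hmL) dist_nonneg)
      two_ne_zero).1 ?_
    rw [mul_pow, hG, hD]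
    linarith [hangular.2, hradial.2]

theorem HasSlopeIn.radialMap_surjective (hφ : HasSlopeIn m L φ) (hm : 0 < m) (hφ0 : φ 0 = 0)
    (c : E) : Surjective (radialMap φ c) := by
  intro z
  rcases eq_or_ne z c with rfl | hz
  · exact ⟨z, by simp [radialMap]⟩
  set t := ‖z - c‖
  have ht : 0 < t := norm_pos_iff.2 (sub_ne_zero.2 hz)
  have hφt : t ≤ φ (t / m) := by
    have := (hφ (div_nonneg ht.le hm.le)).1
    rwa [hφ0, sub_zero, sub_zero, mul_div_cancel₀ _ hm.ne'] at this
  obtain ⟨r, hr, hφr⟩ := intermediate_value_Icc (div_nonneg ht.le hm.le)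
    (hφ.continuous hm.le).continuousOn ⟨by rw [hφ0]; exact ht.le, hφt⟩
  have hr₀ : 0 < r := lt_of_le_of_ne hr.1 (by rintro rfl; rw [hφ0] at hφr; exact ht.ne hφr)
  refine ⟨c + (r / t) • (z - c), ?_⟩
  have hnorm : ‖c + (r / t) • (z - c) - c‖ = r := by
    rw [add_sub_cancel_left, norm_smul, Real.norm_of_nonneg (by positivity),
      div_mul_cancel₀ _ ht.ne']
  rw [radialMap, hnorm, hφr, add_sub_cancel_left, smul_smul,
    div_mul_div_cancel₀ hr₀.ne', div_self ht.ne', one_smul, add_sub_cancel]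

theorem exists_pushOut_ball {δ D ρ : ℝ} (hδ : 0 < δ) (hδD : δ < D) (hDρ : D < ρ) :
    ∃ (g : E → E → E) (K L : ℝ≥0), (∀ c, LipschitzWith L (g c)) ∧
      (∀ c, AntilipschitzWith K (g c)) ∧ (∀ c, Surjective (g c)) ∧
      (∀ c x, ρ < dist x c → g c x = x) ∧ (∀ c x, dist x c ≤ ρ → dist (g c x) c ≤ ρ) ∧
      ∀ c x, δ ≤ dist x c → D ≤ dist (g c x) c := by
  obtain ⟨φ, m, L, hm, hφ, hφ0, hφid, hφD⟩ := exists_radial_profile hδ hδD hDρ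
  have hbounds := hφ.dist_radialMap_bounds (E := E) hm.le hφ0
  refine ⟨radialMap φ, (Real.toNNReal m)⁻¹, Real.toNNReal L,
    fun c => LipschitzWith.of_dist_le' fun x y => (hbounds c x y).2,
    fun c => AntilipschitzWith.of_le_mul_dist fun x y => ?_, hφ.radialMap_surjective hm hφ0,
    fun c x hx => radialMap_eq_self (hφid _ hx.le), fun c x hx => ?_, fun c x hx => ?_⟩
  · rw [NNReal.coe_inv, Real.coe_toNNReal _ hm.le, inv_mul_eq_div, le_div_iff₀ hm, mul_comm]
    exact (hbounds c x y).1
  · have h₀ := (hφ (dist_nonneg (x := x) (y := c))).1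
    have h₁ := (hφ hx).1
    rw [dist_radialMap_center hφ0, abs_of_nonneg (by nlinarith [dist_nonneg (x := x) (y := c)])]
    rw [hφid ρ le_rfl] at h₁
    nlinarith
  · rw [dist_radialMap_center hφ0]
    exact (hφD _ hx).trans (le_abs_self _)

end Radial

section Fold

variable {X ι : Type*}

theorem lipschitzWith_list_foldr [PseudoEMetricSpace X] {g : ι → X → X} {K : ℝ≥0}
    (hg : ∀ i, LipschitzWith K (g i)) (l : List ι) :
    LipschitzWith (K ^ l.length) fun x => l.foldr g x := by
  induction l with
  | nil => simp only [List.length_nil, pow_zero, List.foldr_nil]; exact LipschitzWith.id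
  | cons i l ih => simpa [pow_succ', Function.comp_def] using (hg i).comp ih

theorem antilipschitzWith_list_foldr [PseudoEMetricSpace X] {g : ι → X → X} {K : ℝ≥0}
    (hg : ∀ i, AntilipschitzWith K (g i)) (l : List ι) :
    AntilipschitzWith (K ^ l.length) fun x => l.foldr g x := by
  induction l with
  | nil => simp only [List.length_nil, pow_zero, List.foldr_nil]; exact AntilipschitzWith.id
  | cons i l ih => simpa [pow_succ, Function.comp_def] using (hg i).comp ih

theorem surjective_list_foldr {g : ι → X → X} (hg : ∀ i, Surjective (g i)) (l : List ι) :
    Surjective fun x => l.foldr g x := by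
  induction l with
  | nil => exact surjective_id
  | cons i l ih => exact (hg i).comp ih

variable [PseudoMetricSpace X] {g : ι → X → X} {c : ι → X} {ρ : ℝ} {l : List ι} {x : X}

theorem list_foldr_eq_self (hfix : ∀ i x, ρ < dist x (c i) → g i x = x)
    (hx : ∀ i ∈ l, ρ < dist x (c i)) : l.foldr g x = x := by
  induction l with
  | nil => rfl
  | cons i l ih =>
    rw [List.foldr_cons, ih fun j hj => hx j (List.mem_cons_of_mem _ hj),
      hfix i x (hx i List.mem_cons_self)]

theorem list_foldr_eq_apply (hfix : ∀ i x, ρ < dist x (c i) → g i x = x)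
    (hball : ∀ i x, dist x (c i) ≤ ρ → dist (g i x) (c i) ≤ ρ)
    (hl : l.Pairwise fun i j => 2 * ρ < dist (c i) (c j)) {i : ι} (hi : i ∈ l)
    (hx : dist x (c i) ≤ ρ) : l.foldr g x = g i x := by
  induction l with
  | nil => cases hi
  | cons j l ih =>
    rw [List.pairwise_cons] at hl
    rw [List.foldr_cons]
    rcases List.mem_cons.1 hi with rfl | hi
    · rw [list_foldr_eq_self hfix fun k hk => ?_]
      linarith [hl.1 k hk, dist_triangle (c i) x (c k), dist_comm (c i) x]
    · rw [ih hl.2 hi, hfix j _]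
      linarith [hl.1 i hi, hball i x hx, dist_triangle (c j) (g i x) (c i),
        dist_comm (c j) (g i x)]

theorem dist_list_foldr_le (hfix : ∀ i x, ρ < dist x (c i) → g i x = x)
    (hball : ∀ i x, dist x (c i) ≤ ρ → dist (g i x) (c i) ≤ ρ)
    (hl : l.Pairwise fun i j => 2 * ρ < dist (c i) (c j))
    (hρ : 0 ≤ ρ) (x : X) : dist (l.foldr g x) x ≤ 2 * ρ := by
  by_cases h : ∃ i ∈ l, dist x (c i) ≤ ρ
  · obtain ⟨i, hi, hx⟩ := h
    rw [list_foldr_eq_apply hfix hball hl hi hx]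
    linarith [hball i x hx, dist_triangle (g i x) (c i) x, dist_comm x (c i)]
  · push Not at h
    rw [list_foldr_eq_self hfix h, dist_self]
    linarith

theorem le_dist_list_foldr (hfix : ∀ i x, ρ < dist x (c i) → g i x = x)
    (hball : ∀ i x, dist x (c i) ≤ ρ → dist (g i x) (c i) ≤ ρ)
    (hl : l.Pairwise fun i j => 2 * ρ < dist (c i) (c j))
    {δ D : ℝ} (hDρ : D ≤ ρ)
    (hpush : ∀ i x, δ ≤ dist x (c i) → D ≤ dist (g i x) (c i)) {i : ι} (hi : i ∈ l)
    (hx : δ ≤ dist x (c i)) : D ≤ dist (l.foldr g x) (c i) := by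
  by_cases hxi : dist x (c i) ≤ ρ
  · rw [list_foldr_eq_apply hfix hball hl hi hxi]
    exact hpush i x hx
  by_cases h : ∃ j ∈ l, dist x (c j) ≤ ρ
  · obtain ⟨j, hj, hxj⟩ := h
    have hij : i ≠ j := by rintro rfl; exact hxi hxj
    have : Std.Symm fun i j => 2 * ρ < dist (c i) (c j) := ⟨fun i j h => by rwa [dist_comm]⟩
    rw [list_foldr_eq_apply hfix hball hl hj hxj]
    linarith [hl.forall hi hj hij, hball j x hxj, dist_triangle (c i) (g j x) (c j),
      dist_comm (c i) (g j x)]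
  · push Not at h
    rw [list_foldr_eq_self hfix h]
    linarith

end Fold

theorem exists_near_far_from_sphere {V : Type*} [NormedAddCommGroup V] [NormedSpace ℝ V]
    (a q : V) {R δ : ℝ} (hδ : 0 ≤ δ) (hδR : δ ≤ R) :
    ∃ c, dist c q ≤ 2 * δ ∧ ∀ x ∈ sphere a R, δ ≤ dist x c := by
  suffices ∃ c, dist c q ≤ 2 * δ ∧ δ ≤ |dist c a - R| by
    obtain ⟨c, hcq, hc⟩ := this
    refine ⟨c, hcq, fun x hx => ?_⟩
    rw [mem_sphere] at hx
    rw [← hx] at hc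
    exact (hc.trans (abs_dist_sub_le c x a)).trans_eq (dist_comm c x)
  by_cases hq : δ ≤ |dist q a - R|
  · exact ⟨q, by rw [dist_self]; linarith, hq⟩
  rw [not_le, abs_lt] at hq
  have hqa : 0 < dist q a := by linarith
  set k := (R + δ) / dist q a
  have hk : k * dist q a = R + δ := div_mul_cancel₀ _ hqa.ne'
  refine ⟨a + k • (q - a), ?_, ?_⟩
  · rw [dist_eq_norm, show a + k • (q - a) - q = (k - 1) • (q - a) by module, norm_smul,
      Real.norm_eq_abs, ← dist_eq_norm, ← abs_of_pos hqa, ← abs_mul, sub_mul, hk, one_mul, abs_le]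
    constructor <;> linarith
  · rw [dist_eq_norm, add_sub_cancel_left, norm_smul, Real.norm_eq_abs, ← dist_eq_norm,
      abs_of_nonneg (div_nonneg (by linarith) hqa.le), hk, add_sub_cancel_left, abs_of_nonneg hδ]

section Cube

variable {d : ℕ} (a : EuclideanSpace ℝ (Fin d)) {ℓ : ℝ}

theorem cube_eq_preimage_closedBall (hℓ : 0 ≤ ℓ) :
    cube d a ℓ = WithLp.ofLp ⁻¹' closedBall a.ofLp (ℓ / 2) := by
  ext x
  simp [cube, mem_closedBall, dist_pi_le_iff (by linarith : 0 ≤ ℓ / 2), Real.dist_eq]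

theorem isCompact_cube (hℓ : 0 ≤ ℓ) : IsCompact (cube d a ℓ) := by
  rw [cube_eq_preimage_closedBall a hℓ]
  exact (PiLp.homeomorph 2 _).isCompact_preimage.2 (isCompact_closedBall _ _)

theorem frontier_cube (hℓ : 0 < ℓ) :
    frontier (cube d a ℓ) = WithLp.ofLp ⁻¹' sphere a.ofLp (ℓ / 2) := by
  rw [cube_eq_preimage_closedBall a hℓ.le, ← frontier_closedBall _ (by positivity : ℓ / 2 ≠ 0)]
  exact ((PiLp.homeomorph 2 _).preimage_frontier _).symm

theorem nonempty_frontier_cube [NeZero d] (hℓ : 0 < ℓ) : (frontier (cube d a ℓ)).Nonempty := by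
  obtain ⟨y, hy⟩ := (NormedSpace.sphere_nonempty (x := a.ofLp)).2 (by positivity : 0 ≤ ℓ / 2)
  exact ⟨WithLp.toLp 2 y, by rwa [frontier_cube a hℓ]⟩

theorem exists_near_far_from_frontier_cube (hℓ : 0 < ℓ) (q : EuclideanSpace ℝ (Fin d))
    {δ : ℝ} (hδ : 0 ≤ δ) (hδℓ : δ ≤ ℓ / 2) :
    ∃ c, dist c q ≤ 2 * √d * δ ∧ ∀ x ∈ frontier (cube d a ℓ), δ ≤ dist x c := by
  obtain ⟨c, hcq, hc⟩ := exists_near_far_from_sphere a.ofLp q.ofLp hδ hδℓ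
  refine ⟨WithLp.toLp 2 c, ?_, fun x hx => ?_⟩
  · have hκ : dist (WithLp.toLp 2 c) q ≤ √d * dist c q.ofLp := by
      simpa [NNReal.coe_rpow, Real.sqrt_eq_rpow] using
        (PiLp.antilipschitzWith_ofLp 2 (fun _ : Fin d => ℝ)).le_mul_dist (WithLp.toLp 2 c) q
    calc dist (WithLp.toLp 2 c) q ≤ √d * (2 * δ) :=
          hκ.trans (mul_le_mul_of_nonneg_left hcq (Real.sqrt_nonneg _))
      _ = 2 * √d * δ := by ring
  · rw [frontier_cube a hℓ] at hx
    have := (PiLp.lipschitzWith_ofLp 2 (fun _ : Fin d => ℝ)).dist_le_mul x (WithLp.toLp 2 c)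
    simp only [NNReal.coe_one, one_mul] at this
    exact (hc _ hx).trans this

end Cube

section Separated

variable {E : Type*} [NormedAddCommGroup E] [InnerProductSpace ℝ E] [ProperSpace E]

theorem exists_biLipschitz_far_from_separated {F Λ : Set E} (hF : IsBounded F) {r δ : ℝ}
    (hδ : 0 < δ) (hδr : δ < 3 * r / 16) (hΛ : Λ.Pairwise fun p q => r ≤ dist p q)
    (hcen : ∀ q ∈ Λ, ∃ c, dist c q ≤ r / 32 ∧ ∀ x ∈ F, δ ≤ dist x c) :
    ∃ (f : E → E) (K L : ℝ≥0), LipschitzWith L f ∧ AntilipschitzWith K f ∧ Surjective f ∧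
      (∀ x, dist (f x) x ≤ r / 2) ∧ ∀ p ∈ Λ, ∀ x ∈ F, r / 8 ≤ dist p (f x) := by
  have hr : 0 < r := by linarith
  obtain ⟨g, K, L, hgL, hgA, hgs, hfix, hball, hpush⟩ :=
    exists_pushOut_ball (E := E) hδ hδr (by linarith : 3 * r / 16 < r / 4)
  choose! cen hcen_near hcen_far using hcen
  set S := Λ ∩ thickening (5 * r / 8) F
  have hS : S.Finite :=
    (hF.thickening.isCompact_closure.totallyBounded.subset (inter_subset_right.trans subset_closure)
      ).finite_of_pairwise_le_dist hr (hΛ.mono inter_subset_left)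
  set l := hS.toFinset.toList
  have hl_mem : ∀ {q}, q ∈ l ↔ q ∈ S := by simp [l]
  have hl : l.Pairwise fun p q => 2 * (r / 4) < dist (cen p) (cen q) :=
    hS.toFinset.nodup_toList.imp_of_mem fun {p q} hp hq hpq => by
      have hp' := (hl_mem.1 hp).1
      have hq' := (hl_mem.1 hq).1
      linarith [hΛ hp' hq' hpq, hcen_near _ hp', hcen_near _ hq',
        dist_triangle4 p (cen p) (cen q) q, dist_comm p (cen p)]
  set f : E → E := fun x => l.foldr (fun q => g (cen q)) x
  have hdisp : ∀ x, dist (f x) x ≤ r / 2 := fun x =>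
    (dist_list_foldr_le (fun q => hfix (cen q)) (fun q => hball (cen q)) hl (by linarith) x
      ).trans_eq (by ring)
  refine ⟨f, K ^ l.length, L ^ l.length, lipschitzWith_list_foldr (fun q => hgL (cen q)) l,
    antilipschitzWith_list_foldr (fun q => hgA (cen q)) l,
    surjective_list_foldr (fun q => hgs (cen q)) l, hdisp, fun p hp x hx => ?_⟩
  by_cases hpS : p ∈ S
  · have : 3 * r / 16 ≤ dist (f x) (cen p) :=
      le_dist_list_foldr (fun q => hfix (cen q)) (fun q => hball (cen q)) hl (by linarith)
        (fun q => hpush (cen q)) (hl_mem.2 hpS) (hcen_far p hp x hx)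
    linarith [dist_triangle (f x) p (cen p), hcen_near p hp, dist_comm p (f x),
      dist_comm (cen p) p]
  · have : 5 * r / 8 ≤ dist p x := by
      by_contra h
      exact hpS ⟨hp, mem_thickening_iff.2 ⟨x, hx, not_le.1 h⟩⟩
    linarith [dist_triangle p (f x) x, hdisp x, dist_comm x (f x)]

end Separated

end Crenel

open Crenel

/-- Crenel boundaries, part 1 (Proposition 5.3(1)). -/
theorem stmt_11 (d : ℕ) (hd : 1 ≤ d) (r0 : ℝ) (hr0 : 0 < r0) (hr0' : r0 ≤ 1)
    (Λ : Set (EuclideanSpace ℝ (Fin d)))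
    (hsep : ∀ p ∈ Λ, ∀ q ∈ Λ, p ≠ q → r0 ≤ dist p q)
    (ℓ : ℝ) (hℓ : 1 ≤ ℓ) (a : EuclideanSpace ℝ (Fin d)) :
    ∃ (Γ : Set (EuclideanSpace ℝ (Fin d)))
      (f : EuclideanSpace ℝ (Fin d) → EuclideanSpace ℝ (Fin d)),
      IsCompact Γ ∧
      Set.BijOn f (cube d a ℓ) Γ ∧
      (∃ c C : ℝ, 0 < c ∧
        ∀ x ∈ cube d a ℓ, ∀ y ∈ cube d a ℓ,
          c * dist x y ≤ dist (f x) (f y) ∧ dist (f x) (f y) ≤ C * dist x y) ∧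
      (∀ x ∈ cube d a ℓ, dist (f x) x ≤ 1) ∧
      (∀ p ∈ Λ ∩ Γ, r0 / 8 ≤ Metric.infDist p (frontier Γ)) := by
  have : NeZero d := ⟨by omega⟩
  have hℓ₀ : 0 < ℓ := by linarith
  have hK := isCompact_cube a hℓ₀.le
  have hsqrt : 1 ≤ √d := Real.one_le_sqrt.2 (by exact_mod_cast hd)
  set δ := r0 / (64 * √d) with hδ_def
  have hδ : 0 < δ := by positivity
  have hδr0 : δ ≤ r0 / 64 := div_le_div_of_nonneg_left hr0.le (by norm_num) (by linarith)
  obtain ⟨f, κ, L, hfL, hfA, hfs, hdisp, hfar⟩ := exists_biLipschitz_far_from_separated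
    (hK.isBounded.closure.subset frontier_subset_closure) hδ (by linarith) hsep fun q _ => by
      obtain ⟨c, hcq, hc⟩ := exists_near_far_from_frontier_cube a hℓ₀ q hδ.le (by linarith)
      exact ⟨c, hcq.trans_eq (by rw [hδ_def]; field_simp; ring), hc⟩
  have hf : IsHomeomorph f := isHomeomorph_iff_isEmbedding_surjective.2
    ⟨(hfA.isUniformEmbedding hfL.uniformContinuous).isEmbedding, hfs⟩
  refine ⟨f '' cube d a ℓ, f, hK.image hfL.continuous, hfA.injective.injOn.bijOn_image,
    ⟨((κ : ℝ) + 1)⁻¹, L, by positivity, fun x _ y _ => ⟨?_, hfL.dist_le_mul x y⟩⟩,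
    fun x _ => (hdisp x).trans (by linarith), ?_⟩
  · rw [inv_mul_le_iff₀ (by positivity)]
    linarith [hfA.le_mul_dist x y, dist_nonneg (x := f x) (y := f y)]
  · rintro p ⟨hp, -⟩
    rw [← hf.image_frontier, le_infDist ((nonempty_frontier_cube a hℓ₀).image f)]
    rintro _ ⟨x, hx, rfl⟩
    exact hfar p hp x hx
end

section
/- Crenel boundaries, part 2: existence of a cube avoiding the charges (Proposition 5.3(2)). There exists a constant C>0 depending only on d such that: if 0<r_0<1, ℓ≥1, a∈ℝ^d, Λ⊂ℝ^d satisfies |p−q|≥r_0 for all p≠q∈Λ, and 0<r_1 ≤ C r_0^d ℓ^{−(d−1)}, then there exists τ∈[−1,1] such that dist(p, ∂K_{ℓ+τ}(a)) ≥ r_1 for every p∈Λ. -/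
open MeasureTheory Metric Set

/-!
With `N x = ‖x - a‖_∞`, the boundary of `K_l(a)` is the level set `N = l / 2`, and `N` is
1-Lipschitz for the Euclidean distance, so `dist(p, ∂K_{ℓ+τ}(a)) ≥ |N p - (ℓ + τ) / 2|`. Only the
points of `Λ` with `|N p - ℓ / 2| ≤ 1` can come close to one of these boundaries. Their disjoint
balls of radius `r₀ / 2` lie in a sup-norm shell of width `3` and volume `O(ℓ^(d-1))`, so there are
`O(r₀^(-d) ℓ^(d-1))` of them, and the values of `τ` they exclude are covered by that many intervals
of length `4 r₁`, which cannot cover `[-1, 1]` once `C` is small.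
-/

open WithLp (ofLp toLp)

lemma EuclideanSpace.dist_ofLp_le {ι : Type*} [Fintype ι] (x y : EuclideanSpace ℝ ι) :
    dist (ofLp x) (ofLp y) ≤ dist x y := by
  simpa using (PiLp.lipschitzWith_ofLp 2 fun _ : ι => ℝ).dist_le_mul x y

section Cube

variable {d : ℕ}

lemma cube_eq_preimage_closedBall (a : EuclideanSpace ℝ (Fin d)) {l : ℝ} (hl : 0 ≤ l) :
    cube d a l = ofLp ⁻¹' closedBall (ofLp a) (l / 2) := by
  ext x
  simp [cube, dist_pi_le_iff (by linarith : 0 ≤ l / 2), Real.dist_eq]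

lemma frontier_cube [Nonempty (Fin d)] (a : EuclideanSpace ℝ (Fin d)) {l : ℝ} (hl : 0 < l) :
    frontier (cube d a l) = ofLp ⁻¹' sphere (ofLp a) (l / 2) := by
  rw [cube_eq_preimage_closedBall a hl.le, ← frontier_closedBall _ (by positivity)]
  exact ((PiLp.homeomorph 2 fun _ : Fin d => ℝ).preimage_frontier _).symm

lemma abs_sub_le_infDist_frontier_cube [Nonempty (Fin d)] (a p : EuclideanSpace ℝ (Fin d))
    {l : ℝ} (hl : 0 < l) :
    |dist (ofLp p) (ofLp a) - l / 2| ≤ infDist p (frontier (cube d a l)) := by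
  obtain ⟨z, hz⟩ := (NormedSpace.sphere_nonempty (x := ofLp a)).2 (by positivity : 0 ≤ l / 2)
  rw [frontier_cube a hl]
  refine (le_infDist ⟨toLp 2 z, hz⟩).2 fun y hy => ?_
  rw [mem_preimage, mem_sphere] at hy
  calc |dist (ofLp p) (ofLp a) - l / 2|
      = |dist (ofLp p) (ofLp a) - dist (ofLp y) (ofLp a)| := by rw [hy]
    _ ≤ dist (ofLp p) (ofLp y) := abs_dist_sub_le _ _ _
    _ ≤ dist p y := EuclideanSpace.dist_ofLp_le p y

end Cube

lemma Real.volume_pi_closedBall_diff_ball {ι : Type*} [Fintype ι] [Nonempty ι] (c : ι → ℝ)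
    {ρ R : ℝ} (hρ : 0 ≤ ρ) (hρR : ρ ≤ R) :
    volume (closedBall c R \ ball c ρ) =
      ENNReal.ofReal ((2 * R) ^ Fintype.card ι - (2 * ρ) ^ Fintype.card ι) := by
  have hball : volume (ball c ρ) = ENNReal.ofReal ((2 * ρ) ^ Fintype.card ι) := by
    rcases hρ.eq_or_lt with rfl | hρ
    · simp [Fintype.card_ne_zero]
    · rw [Real.volume_pi_ball c hρ, ENNReal.ofReal_pow (by positivity)]
  rw [measure_sdiff (ball_subset_closedBall.trans (closedBall_subset_closedBall hρR))
    measurableSet_ball.nullMeasurableSet (hball ▸ ENNReal.ofReal_ne_top),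
    Real.volume_pi_closedBall c (hρ.trans hρR), hball,
    ENNReal.ofReal_sub _ (by positivity)]

lemma Real.volume_pi_abs_dist_sub_lt_le {ι : Type*} [Fintype ι] [Nonempty ι] (c : ι → ℝ)
    {R δ : ℝ} (hR : 0 ≤ R) (hδ : 0 ≤ δ) :
    volume {x | |dist x c - R| < δ} ≤
      ENNReal.ofReal (4 * δ * Fintype.card ι * (2 * (R + δ)) ^ (Fintype.card ι - 1)) := by
  have hsub : {x | |dist x c - R| < δ} ⊆ closedBall c (R + δ) \ ball c (max (R - δ) 0) := by
    intro x hx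
    rw [mem_ofPred_eq, abs_lt] at hx
    simp only [mem_sdiff, mem_closedBall, mem_ball, not_lt, max_le_iff]
    exact ⟨by linarith, by linarith, dist_nonneg⟩
  refine (measure_mono hsub).trans ?_
  rw [Real.volume_pi_closedBall_diff_ball c (le_max_right _ _) (max_le (by linarith) (by linarith))]
  refine ENNReal.ofReal_le_ofReal ((le_abs_self _).trans (abs_pow_sub_pow_le _ _ _) |>.trans ?_)
  have h1 : |2 * (R + δ) - 2 * max (R - δ) 0| ≤ 4 * δ := by
    rw [abs_le]; constructor <;> cases max_cases (R - δ) 0 <;> linarith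
  have h2 : max |2 * (R + δ)| |2 * max (R - δ) 0| = 2 * (R + δ) := by
    rw [abs_of_nonneg (by positivity), abs_of_nonneg (by positivity)]
    exact max_eq_left (by cases max_cases (R - δ) 0 <;> linarith)
  rw [h2]
  gcongr

section Packing

variable {E : Type*} [NormedAddCommGroup E] [MeasurableSpace E] [BorelSpace E]
  (μ : Measure E) [μ.IsAddHaarMeasure] {r : ℝ} {A : Set E}

lemma Finset.card_mul_measure_ball_le {T : Finset E}
    (hT : (T : Set E).Pairwise fun p q => r ≤ dist p q) (hA : ∀ p ∈ T, ball p (r / 2) ⊆ A) :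
    T.card * μ (ball 0 (r / 2)) ≤ μ A := by
  have hdisj : (T : Set E).PairwiseDisjoint fun p => ball p (r / 2) :=
    fun p hp q hq hpq => ball_disjoint_ball (by linarith [hT hp hq hpq])
  calc T.card * μ (ball 0 (r / 2)) = ∑ p ∈ T, μ (ball p (r / 2)) := by
        simp [Measure.addHaar_ball_center]
    _ = μ (⋃ p ∈ T, ball p (r / 2)) :=
        (measure_biUnion_finset hdisj fun _ _ => measurableSet_ball).symm
    _ ≤ μ A := measure_mono (iUnion₂_subset hA)

lemma Set.Finite.of_pairwise_le_dist {S : Set E} (hr : 0 < r)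
    (hS : S.Pairwise fun p q => r ≤ dist p q) (hA : ∀ p ∈ S, ball p (r / 2) ⊆ A)
    (hAfin : μ A ≠ ⊤) : S.Finite := by
  by_contra hinf
  obtain ⟨n, hn⟩ := ENNReal.exists_nat_mul_gt (measure_ball_pos μ (0 : E) (half_pos hr)).ne' hAfin
  obtain ⟨T, hTS, rfl⟩ := Set.Infinite.exists_subset_card_eq hinf n
  exact (Finset.card_mul_measure_ball_le μ (hS.mono hTS) fun p hp => hA p (hTS hp)).not_gt hn

end Packing

lemma exists_mem_Ioo_forall_le_abs_sub {ι : Type*} (T : Finset ι) (f : ι → ℝ) {r a b : ℝ}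
    (hr : 0 ≤ r) (hT : T.card * (2 * r) < b - a) :
    ∃ s ∈ Ioo a b, ∀ i ∈ T, r ≤ |f i - s| := by
  by_contra! h
  have hcover : Ioo a b ⊆ ⋃ i ∈ T, Ioo (f i - r) (f i + r) := fun s hs => by
    obtain ⟨i, hi, hlt⟩ := h s hs
    rw [abs_sub_lt_iff] at hlt
    exact mem_biUnion hi ⟨by linarith, by linarith⟩
  have := (measure_mono hcover).trans (measure_biUnion_finset_le (μ := volume) T _)
  simp only [Real.volume_Ioo, add_sub_sub_cancel, Finset.sum_const, nsmul_eq_mul] at this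
  rw [← two_mul, ← ENNReal.ofReal_natCast, ← ENNReal.ofReal_mul (by positivity),
    ENNReal.ofReal_le_ofReal_iff (by positivity)] at this
  linarith

section Crenel

variable {d : ℕ}

lemma exists_shift_le_infDist_frontier_cube [Nonempty (Fin d)] (a : EuclideanSpace ℝ (Fin d))
    {Λ : Set (EuclideanSpace ℝ (Fin d))} {ℓ r : ℝ} (hℓ : 1 ≤ ℓ) (hr : 0 ≤ r) (hr' : r ≤ 1 / 2)
    (T : Finset (EuclideanSpace ℝ (Fin d)))
    (hT : ∀ p ∈ Λ, |dist (ofLp p) (ofLp a) - ℓ / 2| ≤ 1 → p ∈ T)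
    (hcard : T.card * (2 * r) < 1) :
    ∃ τ ∈ Icc (-1 : ℝ) 1, ∀ p ∈ Λ, r ≤ infDist p (frontier (cube d a (ℓ + τ))) := by
  obtain ⟨s, ⟨hs₁, hs₂⟩, hs⟩ := exists_mem_Ioo_forall_le_abs_sub T
    (fun p => dist (ofLp p) (ofLp a) - ℓ / 2) hr (a := -(1 / 2)) (b := 1 / 2) (by linarith)
  refine ⟨2 * s, ⟨by linarith, by linarith⟩, fun p hp => le_trans ?_
    (abs_sub_le_infDist_frontier_cube a p (by linarith))⟩
  rw [show (ℓ + 2 * s) / 2 = ℓ / 2 + s by ring, ← sub_sub]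
  by_cases hnear : |dist (ofLp p) (ofLp a) - ℓ / 2| ≤ 1
  · exact hs p (hT p hp hnear)
  · have hs : |s| < 1 / 2 := abs_lt.2 ⟨hs₁, hs₂⟩
    linarith [abs_sub_abs_le_abs_sub (dist (ofLp p) (ofLp a) - ℓ / 2) s]

lemma exists_finset_near_frontier_card_le (m : ℕ) (a : EuclideanSpace ℝ (Fin (m + 1)))
    {Λ : Set (EuclideanSpace ℝ (Fin (m + 1)))} {r ℓ : ℝ} (hr : 0 < r) (hr' : r ≤ 1) (hℓ : 1 ≤ ℓ)
    (hΛ : Λ.Pairwise fun p q => r ≤ dist p q) :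
    ∃ T : Finset (EuclideanSpace ℝ (Fin (m + 1))),
      (∀ p ∈ Λ, |dist (ofLp p) (ofLp a) - ℓ / 2| ≤ 1 → p ∈ T) ∧
      T.card * (r / 2) ^ (m + 1) * (volume (ball (0 : EuclideanSpace ℝ (Fin (m + 1))) 1)).toReal
        ≤ 6 * (m + 1) * 4 ^ m * ℓ ^ m := by
  set S := {p ∈ Λ | |dist (ofLp p) (ofLp a) - ℓ / 2| ≤ 1}
  set A : Set (EuclideanSpace ℝ (Fin (m + 1))) :=
    ofLp ⁻¹' {x | |dist x (ofLp a) - ℓ / 2| < 3 / 2}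
  have hA : volume A ≤ ENNReal.ofReal (6 * (m + 1) * 4 ^ m * ℓ ^ m) := by
    rw [(PiLp.volume_preserving_ofLp (Fin (m + 1))).measure_preimage
      (isOpen_lt (by fun_prop) continuous_const).measurableSet.nullMeasurableSet]
    refine (Real.volume_pi_abs_dist_sub_lt_le _ (by linarith) (by norm_num)).trans
      (ENNReal.ofReal_le_ofReal ?_)
    have : (2 * (ℓ / 2 + 3 / 2)) ^ m ≤ 4 ^ m * ℓ ^ m := by
      rw [← mul_pow]; exact pow_le_pow_left₀ (by positivity) (by linarith) m
    simp only [Fintype.card_fin, add_tsub_cancel_right, Nat.cast_add, Nat.cast_one]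
    nlinarith
  have hballs : ∀ p ∈ S, ball p (r / 2) ⊆ A := by
    intro p hp y hy
    have hyp : dist (ofLp y) (ofLp p) < 1 / 2 := by
      linarith [EuclideanSpace.dist_ofLp_le y p, mem_ball.1 hy]
    calc |dist (ofLp y) (ofLp a) - ℓ / 2|
        ≤ |dist (ofLp y) (ofLp a) - dist (ofLp p) (ofLp a)| + |dist (ofLp p) (ofLp a) - ℓ / 2| :=
          abs_sub_le _ _ _
      _ < 1 / 2 + 1 := add_lt_add_of_lt_of_le ((abs_dist_sub_le _ _ _).trans_lt hyp) hp.2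
      _ = 3 / 2 := by norm_num
  have hSfin := Set.Finite.of_pairwise_le_dist volume hr (hΛ.mono (sep_subset _ _)) hballs
    (ne_top_of_le_ne_top ENNReal.ofReal_ne_top hA)
  refine ⟨hSfin.toFinset, fun p hp hnear => hSfin.mem_toFinset.2 ⟨hp, hnear⟩, ?_⟩
  have := (Finset.card_mul_measure_ball_le volume (T := hSfin.toFinset)
    (by rw [hSfin.coe_toFinset]; exact hΛ.mono (sep_subset _ _))
    fun p hp => hballs p (hSfin.mem_toFinset.1 hp)).trans hA
  rw [Measure.addHaar_ball _ _ (by positivity), finrank_euclideanSpace_fin] at this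
  have := ENNReal.toReal_le_of_le_ofReal (by positivity) this
  simpa [ENNReal.toReal_mul, ENNReal.toReal_ofReal (by positivity : 0 ≤ (r / 2) ^ (m + 1)),
    mul_assoc] using this

end Crenel

/-- Crenel boundaries, part 2: existence of a cube avoiding the charges
(Proposition 5.3(2)). -/
theorem stmt_13 (d : ℕ) (hd : 1 ≤ d) :
    ∃ C : ℝ, 0 < C ∧
      ∀ (r0 ℓ : ℝ) (a : EuclideanSpace ℝ (Fin d)) (Λ : Set (EuclideanSpace ℝ (Fin d))) (r1 : ℝ),
        0 < r0 → r0 < 1 → 1 ≤ ℓ →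
        (∀ p ∈ Λ, ∀ q ∈ Λ, p ≠ q → r0 ≤ dist p q) →
        0 < r1 → r1 ≤ C * r0 ^ (d : ℝ) * ℓ ^ (-((d : ℝ) - 1)) →
        ∃ τ ∈ Set.Icc (-1 : ℝ) 1,
          ∀ p ∈ Λ, r1 ≤ Metric.infDist p (frontier (cube d a (ℓ + τ))) := by
  obtain ⟨m, rfl⟩ : ∃ m, d = m + 1 := ⟨d - 1, by omega⟩
  set w := (volume (ball (0 : EuclideanSpace ℝ (Fin (m + 1))) 1)).toReal
  have hw : 0 < w := ENNReal.toReal_pos (measure_ball_pos _ _ one_pos).ne' measure_ball_lt_top.ne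
  set K : ℝ := 6 * (m + 1) * 4 ^ m
  have hK : 0 < K := by positivity
  refine ⟨min (1 / 2) (w / (2 ^ (m + 3) * K)), by positivity, ?_⟩
  intro r0 ℓ a Λ r1 hr0 hr01 hℓ hsep hr1 hr1le
  have hℓm : 1 ≤ ℓ ^ m := one_le_pow₀ hℓ
  rw [show -(((m + 1 : ℕ) : ℝ) - 1) = -(m : ℝ) by push_cast; ring, Real.rpow_neg (by linarith),
    Real.rpow_natCast, Real.rpow_natCast] at hr1le
  obtain ⟨T, hT, hcard⟩ := exists_finset_near_frontier_card_le m a hr0 hr01.le hℓ hsep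
  refine exists_shift_le_infDist_frontier_cube a hℓ hr1.le ?_ T hT ?_
  · calc r1 ≤ min (1 / 2) (w / (2 ^ (m + 3) * K)) * r0 ^ (m + 1) * (ℓ ^ m)⁻¹ := hr1le
      _ ≤ 1 / 2 * 1 * 1 := by
          gcongr
          exacts [min_le_left _ _, pow_le_one₀ hr0.le hr01.le, inv_le_one_of_one_le₀ hℓm]
      _ = 1 / 2 := by norm_num
  · calc T.card * (2 * r1)
        ≤ T.card * (2 * (w / (2 ^ (m + 3) * K) * r0 ^ (m + 1) * (ℓ ^ m)⁻¹)) := by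
          gcongr; exact hr1le.trans (by gcongr; exact min_le_right _ _)
      _ = 2 ^ (m + 1) * (T.card * (r0 / 2) ^ (m + 1) * w) / (2 * (2 ^ (m + 1) * K * ℓ ^ m)) := by
          rw [div_pow]; field_simp; ring
      _ ≤ 2 ^ (m + 1) * (K * ℓ ^ m) / (2 * (2 ^ (m + 1) * K * ℓ ^ m)) := by gcongr
      _ < 1 := by field_simp; norm_num
end
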